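/- Under a product partition model where p(y, m | K) = C_K(a)^{-1} ∏_{r∈m} a_r p(y^r), the posterior distribution of K given y satisfies p(K | y) ∝ p(K) · [A^K]_{1,N+1} / C_K(a), where A_{s,t} = a_{[s,t)} p(y^{[s,t)}) for s < t and C_K(a) = Σ_{m ∈ M_K} ∏_{r∈m} a_r. -/

import Mathlib

/-!
Expanding `A ^ K` entrywise writes `[A^K]_{1,N+1}` as a sum over index sequences
`1 = τ₀, τ₁, …, τ_K = N+1` of `∏ A_{τ_j τ_{j+1}}`. Since `A_{s,t} = 0` unless `1 ≤ s < t`, only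
strictly increasing sequences, i.e. segmentations in `M_K`, survive, so `[A^K]_{1,N+1}` is the
numerator `Σ_{m∈M_K} ∏_{r∈m} a_r p(y^r)` of `p(y|K)`. The posterior is then the normalised
`p(K) [A^K]_{1,N+1} / C_K(a)`; the normaliser is positive because its `K = 1` term is.
-/

open scoped Classical

/-- The set of segmentations of `{1,...,N}` into `K` segments, encoded by change-points
`1 = τ₀ < ... < τ_K = N+1` (values in `Fin (N+2)`). -/
def Seg (N K : ℕ) : Finset (Fin (K + 1) → Fin (N + 2)) :=
  Finset.univ.filter (fun τ =>
    StrictMono τ ∧ τ 0 = 1 ∧ τ (Fin.last K) = ⟨N + 1, Nat.lt_succ_self _⟩)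

/-- The segment-weight matrix: `A s t = w s t` if `1 ≤ s < t`, else `0`. -/
def segMat (N : ℕ) (w : Fin (N + 2) → Fin (N + 2) → ℝ) :
    Matrix (Fin (N + 2)) (Fin (N + 2)) ℝ :=
  fun s t => if 1 ≤ (s : ℕ) ∧ s < t then w s t else 0

open Finset

namespace Matrix

variable {n R : Type*} [Fintype n] [DecidableEq n] [CommSemiring R]

def pathsBetween (K : ℕ) (s t : n) : Finset (Fin (K + 1) → n) :=
  univ.filter fun τ => τ 0 = s ∧ τ (Fin.last K) = t

theorem pow_apply_eq_sum_paths (A : Matrix n n R) (K : ℕ) (s t : n) :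
    (A ^ K) s t = ∑ τ ∈ pathsBetween K s t, ∏ j : Fin K, A (τ j.castSucc) (τ j.succ) := by
  induction K generalizing t with
  | zero =>
    have hpaths : pathsBetween 0 s t = if s = t then {fun _ => s} else ∅ := by
      ext τ
      split_ifs with h <;> simp [pathsBetween, funext_iff, Fin.forall_fin_one, h]
      rintro rfl
      exact h
    rw [hpaths, pow_zero, one_apply]
    split_ifs <;> simp
  | succ K ih =>
    rw [pow_succ, mul_apply]
    simp_rw [ih, sum_mul]
    rw [sum_sigma']
    refine sum_bij' (fun p _ => Fin.snoc p.2 t) (fun σ _ => ⟨σ (Fin.last K).castSucc, Fin.init σ⟩)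
      ?_ ?_ ?_ ?_ ?_
    · rintro ⟨u, τ⟩ hτ
      simp_all [pathsBetween]
    · intro σ hσ
      simp_all [pathsBetween]
      exact ⟨hσ.1, rfl⟩
    · rintro ⟨u, τ⟩ hτ
      simp_all [pathsBetween]
    · intro σ hσ
      simp only [pathsBetween, mem_filter] at hσ
      rw [← hσ.2.2, Fin.snoc_init_self]
    · rintro ⟨u, τ⟩ hτ
      simp only [pathsBetween, mem_sigma, mem_filter, mem_univ, true_and] at hτ
      rw [Fin.prod_univ_castSucc, ← hτ.2]
      simp [-Fin.castSucc_succ, Fin.succ_castSucc]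

end Matrix

/-- The paper's `C_K(w)`: with `w = a` the prior normaliser, with `w = a · p(y^·)` the numerator
of `p(y|K)`. -/
def segSum (N K : ℕ) (w : Fin (N + 2) → Fin (N + 2) → ℝ) : ℝ :=
  ∑ τ ∈ Seg N K, ∏ j : Fin K, w (τ j.castSucc) (τ j.succ)

section
variable {N K : ℕ} {w : Fin (N + 2) → Fin (N + 2) → ℝ}

lemma prod_segMat_of_zero_eq_one {τ : Fin (K + 1) → Fin (N + 2)} (h0 : τ 0 = 1) :
    ∏ j : Fin K, segMat N w (τ j.castSucc) (τ j.succ) =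
      if StrictMono τ then ∏ j : Fin K, w (τ j.castSucc) (τ j.succ) else 0 := by
  split_ifs with hτ
  · refine prod_congr rfl fun j _ => if_pos ⟨?_, hτ Fin.castSucc_lt_succ⟩
    simpa [h0, Fin.le_def] using hτ.monotone (Fin.zero_le j.castSucc)
  · obtain ⟨j, hj⟩ : ∃ j : Fin K, ¬ τ j.castSucc < τ j.succ := by
      simpa [Fin.strictMono_iff_lt_succ] using hτ
    exact prod_eq_zero (mem_univ j) (if_neg fun h => hj h.2)

theorem segMat_pow_apply (N K : ℕ) (w : Fin (N + 2) → Fin (N + 2) → ℝ) :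
    (segMat N w ^ K) 1 ⟨N + 1, Nat.lt_succ_self _⟩ = segSum N K w := by
  rw [Matrix.pow_apply_eq_sum_paths,
    sum_congr rfl fun τ hτ => prod_segMat_of_zero_eq_one (mem_filter.1 hτ).2.1, ← sum_filter]
  congr 1
  ext τ
  simp only [Matrix.pathsBetween, Seg, mem_filter, mem_univ, true_and]
  tauto

lemma segSum_nonneg (hw : ∀ s t, 0 ≤ w s t) : 0 ≤ segSum N K w :=
  sum_nonneg fun _ _ => prod_nonneg fun _ _ => hw _ _

lemma segSum_one_pos (hN : 1 ≤ N) (hw : ∀ s t, 0 < w s t) : 0 < segSum N 1 w := by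
  refine sum_pos (fun _ _ => prod_pos fun _ _ => hw _ _) ⟨![1, ⟨N + 1, Nat.lt_succ_self _⟩], ?_⟩
  simp only [Seg, mem_filter, mem_univ, true_and, Fin.strictMono_iff_lt_succ, Fin.forall_fin_one]
  refine ⟨?_, rfl, rfl⟩
  simp [Fin.lt_def]
  omega

end

/-- in the product partition model `p(y, m | K) = C_K(a)⁻¹ ∏_{r∈m} a_r p(y^r)`
(prior `p(m|K) = C_K(a)⁻¹ ∏ a_r`, conditionally independent segments), the posterior on the
number of segments `K` satisfies `p(K|y) ∝ p(K) · [A^K]_{1,N+1} / C_K(a)`, where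
`A_{s,t} = a_{[s,t)} p(y^{[s,t)})` and `C_K(a) = Σ_{m∈M_K} ∏_{r∈m} a_r`. -/
theorem posterior_number_of_segments (N : ℕ) (hN : 1 ≤ N)
    (a py : Fin (N + 2) → Fin (N + 2) → ℝ)
    (ha : ∀ s t, 0 < a s t) (hpy : ∀ s t, 0 < py s t)
    (pK : ℕ → ℝ) (hpK : ∀ K, 1 ≤ K → K ≤ N → 0 < pK K) :
    ∃ c : ℝ, 0 < c ∧ ∀ K ∈ Finset.Icc 1 N,
      -- posterior p(K|y), with p(y|K) = Σ_m p(m|K) ∏_{r∈m} p(y^r) obtained from the model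
      pK K * ((∑ τ ∈ Seg N K, ∏ j : Fin K,
            a (τ j.castSucc) (τ j.succ) * py (τ j.castSucc) (τ j.succ)) /
          (∑ τ ∈ Seg N K, ∏ j : Fin K, a (τ j.castSucc) (τ j.succ))) /
        (∑ K' ∈ Finset.Icc 1 N,
          pK K' * ((∑ τ ∈ Seg N K', ∏ j : Fin K',
                a (τ j.castSucc) (τ j.succ) * py (τ j.castSucc) (τ j.succ)) /
              (∑ τ ∈ Seg N K', ∏ j : Fin K', a (τ j.castSucc) (τ j.succ)))) =
      c * (pK K * ((segMat N (fun s t => a s t * py s t) ^ K) 1 ⟨N + 1, Nat.lt_succ_self _⟩ /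
        (∑ τ ∈ Seg N K, ∏ j : Fin K, a (τ j.castSucc) (τ j.succ)))) := by
  let post : ℕ → ℝ := fun K => pK K * (segSum N K (fun s t => a s t * py s t) / segSum N K a)
  have hpost_nonneg : ∀ K ∈ Finset.Icc 1 N, 0 ≤ post K := fun K hK =>
    mul_nonneg (hpK K (mem_Icc.1 hK).1 (mem_Icc.1 hK).2).le
      (div_nonneg (segSum_nonneg fun s t => (mul_pos (ha s t) (hpy s t)).le)
        (segSum_nonneg fun s t => (ha s t).le))
  have hpost_one : 0 < post 1 :=
    mul_pos (hpK 1 le_rfl hN)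
      (div_pos (segSum_one_pos hN fun s t => mul_pos (ha s t) (hpy s t)) (segSum_one_pos hN ha))
  have hZ : 0 < ∑ K ∈ Finset.Icc 1 N, post K :=
    sum_pos' hpost_nonneg ⟨1, mem_Icc.2 ⟨le_rfl, hN⟩, hpost_one⟩
  refine ⟨(∑ K ∈ Finset.Icc 1 N, post K)⁻¹, inv_pos.2 hZ, fun K _ => ?_⟩
  rw [segMat_pow_apply, div_eq_inv_mul]
  rfl
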